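/- arXiv:1202.5626 — 7 statements merged into one kernel-verified Lean document; each statement's English description precedes it below -/
import Mathlib

section
/- Let G be a group and H a subgroup of G. If H is not normal in G, then there exists a normalized right transversal S of H in G (containing 1) which is not a left transversal of H in G, i.e., there exist two distinct elements of S lying in the same left coset of H. -/
/-!
Non-normality gives `n ∈ H` and `g` with `g * n * g⁻¹ ∉ H`. Then `1`, `g` and `g * n` lie in three
distinct right cosets of `H`, while `g` and `g * n` share the left coset `gH`. Any set meeting each
right coset at most once extends to a right transversal, so completing `{1, g, g * n}` gives the
required `S`.
-/

variable {G : Type*} [Group G]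

/-- `S` is a normalized right transversal of `H` in `G`: `1 ∈ S` and `S` contains
exactly one element of each right coset `Hg` (note `s ∈ Hg ↔ s * g⁻¹ ∈ H`). -/
def IsNRT (H : Subgroup G) (S : Set G) : Prop :=
  (1 : G) ∈ S ∧ ∀ g : G, ∃! s, s ∈ S ∧ s * g⁻¹ ∈ H

/-- `S` is a left transversal: exactly one element in each left coset `gH`. -/
def IsLeftT (H : Subgroup G) (S : Set G) : Prop :=
  ∀ g : G, ∃! s, s ∈ S ∧ g⁻¹ * s ∈ H

/-- `op` is the induced operation on `S`: `op x y` is the element of `S ∩ Hxy`. -/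
def IsOp (H : Subgroup G) (S : Set G) (op : G → G → G) : Prop :=
  ∀ x ∈ S, ∀ y ∈ S, op x y ∈ S ∧ op x y * (x * y)⁻¹ ∈ H

/-- `sig x h = σ_x(h)`: the `H`-part in the factorization `x*h = σ_x(h)·(xθh)`,
with `xθh = (sig x h)⁻¹ * (x*h) ∈ S`. -/
def IsSig (H : Subgroup G) (S : Set G) (sig : G → G → G) : Prop :=
  ∀ x ∈ S, ∀ h ∈ H, sig x h ∈ H ∧ (sig x h)⁻¹ * (x * h) ∈ S

namespace Subgroup

variable {H : Subgroup G}

lemma exists_isComplement_right_superset {T : Set G}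
    (hT : T.InjOn (Quotient.mk'' : G → Quotient (QuotientGroup.rightRel H))) :
    ∃ S, IsComplement H S ∧ T ⊆ S := by
  classical
  let f : Quotient (QuotientGroup.rightRel H) → G := fun q =>
    if h : ∃ t ∈ T, Quotient.mk'' t = q then h.choose else q.out
  have hf : ∀ q, Quotient.mk'' (f q) = q := fun q => by
    by_cases h : ∃ t ∈ T, Quotient.mk'' t = q
    · simp only [f, dif_pos h]; exact h.choose_spec.2
    · simp only [f, dif_neg h]; exact q.out_eq'
  refine ⟨Set.range f, isComplement_range_right hf, fun t ht => ⟨Quotient.mk'' t, ?_⟩⟩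
  have h : ∃ t' ∈ T, (Quotient.mk'' t' : Quotient (QuotientGroup.rightRel H)) = Quotient.mk'' t :=
    ⟨t, ht, rfl⟩
  simp only [f, dif_pos h]
  exact hT h.choose_spec.1 ht h.choose_spec.2

lemma exists_conj_notMem_of_not_normal (hH : ¬ H.Normal) :
    ∃ n ∈ H, ∃ g : G, g * n * g⁻¹ ∉ H := by
  by_contra! h
  exact hH ⟨h⟩

end Subgroup

lemma isNRT_of_isComplement {H : Subgroup G} {S : Set G} (hS : Subgroup.IsComplement H S)
    (h1 : 1 ∈ S) : IsNRT H S := by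
  refine ⟨h1, fun g => ?_⟩
  obtain ⟨⟨s, hs⟩, hsg, huniq⟩ := Subgroup.isComplement_iff_existsUnique_mul_inv_mem.mp hS g
  refine ⟨s, ⟨hs, ?_⟩, fun t ⟨ht, htg⟩ => ?_⟩
  · simpa using H.inv_mem hsg
  · exact congrArg Subtype.val (huniq ⟨t, ht⟩ (by simpa using H.inv_mem htg))

theorem stmt_1 (H : Subgroup G) (hH : ¬ H.Normal) :
    ∃ S : Set G, IsNRT H S ∧ ∃ a ∈ S, ∃ b ∈ S, a ≠ b ∧ a⁻¹ * b ∈ H := by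
  obtain ⟨n, hn, g, hgn⟩ := H.exists_conj_notMem_of_not_normal hH
  have hg : g ∉ H := fun hg => hgn (H.mul_mem (H.mul_mem hg hn) (H.inv_mem hg))
  have hgn' : g * n ∉ H := fun h => hg (by simpa using H.mul_mem h (H.inv_mem hn))
  have hinj : ({1, g, g * n} : Set G).InjOn
      (Quotient.mk'' : G → Quotient (QuotientGroup.rightRel H)) := by
    intro x hx y hy hxy
    rw [Quotient.eq'', QuotientGroup.rightRel_apply] at hxy
    have hyx := H.inv_mem hxy
    simp only [Set.mem_insert_iff, Set.mem_singleton_iff] at hx hy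
    rcases hx with rfl | rfl | rfl <;> rcases hy with rfl | rfl | rfl <;> simp_all [mul_assoc]
  obtain ⟨S, hS, hTS⟩ := Subgroup.exists_isComplement_right_superset hinj
  refine ⟨S, isNRT_of_isComplement hS (hTS (by simp)), g, hTS (by simp), g * n, hTS (by simp),
    fun h => hgn (by simp [← h]), by simp [hn]⟩
end

section
/- Let G be a group, H a subgroup, S a normalized right transversal of H in G with induced operation ∘. If for every x ∈ S there exists a ∈ S with x∘a = 1, then for every x ∈ S the map σ_x : H → H defined by x·h = σ_x(h)·(xθh) (where xθh is the unique element of S in the coset Hxh) is surjective. -/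
variable {G : Type*} [Group G]

/-! The right `∘`-inverse `a` of the representative of `H x⁻¹ h'` satisfies `x⁻¹ h' a ∈ H`;
for `h := x⁻¹ h' a` the factorization `x h = h' · a` with `a ∈ S` is the one defining `σ_x`,
so `σ_x(h) = h'`. -/

theorem IsNRT.eq_of_mul_inv_mem {H : Subgroup G} {S : Set G} (hS : IsNRT H S)
    {s s' : G} (hs : s ∈ S) (hs' : s' ∈ S) (hss' : s * s'⁻¹ ∈ H) : s = s' :=
  (hS.2 s').unique ⟨hs, hss'⟩ ⟨hs', by simp⟩

theorem IsOp.mul_mem_of_op_eq_one {H : Subgroup G} {S : Set G} {op : G → G → G}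
    (hop : IsOp H S op) {t a : G} (ht : t ∈ S) (ha : a ∈ S) (hta : op t a = 1) :
    t * a ∈ H := by
  simpa [hta] using H.inv_mem (hop t ht a ha).2

theorem IsNRT.exists_mul_mem_of_op_eq_one {H : Subgroup G} {S : Set G} (hS : IsNRT H S)
    {op : G → G → G} (hop : IsOp H S op) (hinv : ∀ x ∈ S, ∃ a ∈ S, op x a = 1) (g : G) :
    ∃ a ∈ S, g * a ∈ H := by
  obtain ⟨t, ⟨ht, htg⟩, -⟩ := hS.2 g
  obtain ⟨a, ha, hta⟩ := hinv t ht
  refine ⟨a, ha, ?_⟩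
  have hga : g * a = (t * g⁻¹)⁻¹ * (t * a) := by group
  rw [hga]
  exact H.mul_mem (H.inv_mem htg) (hop.mul_mem_of_op_eq_one ht ha hta)

theorem IsSig.eq_of_mul_eq {H : Subgroup G} {S : Set G} (hS : IsNRT H S)
    {sig : G → G → G} (hsig : IsSig H S sig) {x h h' a : G} (hx : x ∈ S) (hh : h ∈ H)
    (hh' : h' ∈ H) (ha : a ∈ S) (hxh : x * h = h' * a) : sig x h = h' := by
  obtain ⟨hσ, hσS⟩ := hsig x hx h hh
  have hσa : (sig x h)⁻¹ * (x * h) = a := by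
    refine hS.eq_of_mul_inv_mem hσS ha ?_
    have : (sig x h)⁻¹ * (x * h) * a⁻¹ = (sig x h)⁻¹ * h' := by rw [hxh]; group
    rw [this]
    exact H.mul_mem (H.inv_mem hσ) hh'
  rw [hxh, ← mul_assoc, mul_eq_right, inv_mul_eq_one] at hσa
  exact hσa

theorem stmt_5 (H : Subgroup G) (S : Set G) (hS : IsNRT H S)
    (op : G → G → G) (hop : IsOp H S op)
    (sig : G → G → G) (hsig : IsSig H S sig)
    (h1 : ∀ x ∈ S, ∃ a ∈ S, op x a = 1) :
    ∀ x ∈ S, ∀ h' ∈ H, ∃ h ∈ H, sig x h = h' := by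
  intro x hx h' hh'
  obtain ⟨a, ha, hxa⟩ := hS.exists_mul_mem_of_op_eq_one hop h1 (x⁻¹ * h')
  exact ⟨x⁻¹ * h' * a, hxa, hsig.eq_of_mul_eq hS hx hxa hh' ha (by group)⟩
end

section
/- Let G be a group, H a subgroup, and S, T two normalized right transversals of H in G whose induced right-loop structures are isomorphic (there is a bijection p: S → T with p(1)=1 and p(x∘y) = p(x)∘'p(y)). If S is a both-sided transversal (also a left transversal of H in G), then T is a both-sided transversal. -/
variable {G : Type*} [Group G]

/-! A normalized right transversal `U` is a left transversal iff every `u ∈ U` has a unique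
right inverse for the induced operation. Each left coset `gH` is `u⁻¹H` for the `u ∈ U` with
`u g ∈ H`, and `op u b = 1` means `b ∈ u⁻¹H`. Right inverses are defined by the loop structure
alone, so the isomorphism `p` carries them from `S` to `T`. -/

namespace IsNRT

variable {H : Subgroup G} {U : Set G}

theorem eq_one_iff_mem (hU : IsNRT H U) {s : G} (hs : s ∈ U) : s = 1 ↔ s ∈ H :=
  ⟨fun h => h ▸ H.one_mem, fun h => (hU.2 1).unique ⟨hs, by simpa using h⟩ ⟨hU.1, by simp⟩⟩

theorem op_eq_one_iff (hU : IsNRT H U) {op : G → G → G} (hop : IsOp H U op) {u t : G}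
    (hu : u ∈ U) (ht : t ∈ U) : op u t = 1 ↔ u * t ∈ H := by
  obtain ⟨hmem, hcoset⟩ := hop u hu t ht
  have := H.mul_mem_cancel_left (y := op u t) (H.inv_mem hcoset)
  rw [mul_inv_rev, inv_inv, inv_mul_cancel_right] at this
  rw [hU.eq_one_iff_mem hmem, this]

theorem isLeftT_iff (hU : IsNRT H U) : IsLeftT H U ↔ ∀ u ∈ U, ∃! b, b ∈ U ∧ u * b ∈ H := by
  refine ⟨fun h u _ => by simpa using h u⁻¹, fun h g => ?_⟩
  obtain ⟨u, ⟨hu, hug⟩, -⟩ := hU.2 g⁻¹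
  rw [inv_inv] at hug
  have hcoset : ∀ s, g⁻¹ * s ∈ H ↔ u * s ∈ H := fun s => by
    rw [← H.mul_mem_cancel_left hug, mul_assoc, mul_inv_cancel_left]
  simpa only [hcoset] using h u hu

theorem isLeftT_iff_op (hU : IsNRT H U) {op : G → G → G} (hop : IsOp H U op) :
    IsLeftT H U ↔ ∀ u ∈ U, ∃! b, b ∈ U ∧ op u b = 1 := by
  rw [hU.isLeftT_iff]
  exact forall₂_congr fun u hu => existsUnique_congr fun b =>
    and_congr_right fun hb => (hU.op_eq_one_iff hop hu hb).symm

end IsNRT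

theorem existsUnique_op_eq_one_of_bijOn {H : Subgroup G} {S T : Set G} {opS opT : G → G → G}
    (hS1 : (1 : G) ∈ S) (hopS : IsOp H S opS) {p : G → G} (hp : Set.BijOn p S T)
    (hp1 : p 1 = 1) (hphom : ∀ x ∈ S, ∀ y ∈ S, p (opS x y) = opT (p x) (p y))
    {x : G} (hx : x ∈ S) (hinv : ∃! a, a ∈ S ∧ opS x a = 1) :
    ∃! b, b ∈ T ∧ opT (p x) b = 1 := by
  obtain ⟨a, ⟨ha, hxa⟩, huniq⟩ := hinv
  refine ⟨p a, ⟨hp.mapsTo ha, by rw [← hphom x hx a ha, hxa, hp1]⟩, ?_⟩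
  rintro _ ⟨hb, hxb⟩
  obtain ⟨a', ha', rfl⟩ := hp.surjOn hb
  have hxa' : opS x a' = 1 :=
    hp.injOn (hopS x hx a' ha').1 hS1 (by rw [hphom x hx a' ha', hxb, hp1])
  rw [huniq a' ⟨ha', hxa'⟩]

theorem stmt_6 (H : Subgroup G) (S T : Set G) (hS : IsNRT H S) (hT : IsNRT H T)
    (opS opT : G → G → G) (hopS : IsOp H S opS) (hopT : IsOp H T opT)
    (p : G → G) (hp : Set.BijOn p S T) (hp1 : p 1 = 1)
    (hphom : ∀ x ∈ S, ∀ y ∈ S, p (opS x y) = opT (p x) (p y))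
    (hSleft : IsLeftT H S) : IsLeftT H T := by
  rw [hS.isLeftT_iff_op hopS] at hSleft
  rw [hT.isLeftT_iff_op hopT]
  intro u hu
  obtain ⟨x, hx, rfl⟩ := hp.surjOn hu
  exact existsUnique_op_eq_one_of_bijOn hS.1 hopS hp hp1 hphom hx (hSleft x hx)
end

section
/- Let G be a group and H a subgroup. Suppose every normalized right transversal S of H in G satisfies H ⊆ N_G(S) (i.e., h⁻¹Sh = S for all h ∈ H). Then H is normal in G. -/
variable {G : Type*} [Group G]

/-! If `ghg⁻¹ ∉ H` for some `h ∈ H`, then `1`, `g` and `gh` lie in three distinct right cosets,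
so some NRT `S` contains all three. Conjugation by `h` preserves `S`, so `h⁻¹gh ∈ S`; but `h⁻¹gh`
lies in the coset `H(gh)`, already represented in `S` by `gh`. Hence `h⁻¹gh = gh`, i.e. `h = 1`,
contradicting `ghg⁻¹ ∉ H`. -/

open Function Set

section Transversals

variable {H : Subgroup G}

theorem IsNRT.eq_of_mul_inv_mem_s7 {S : Set G} (hS : IsNRT H S) {a b : G} (ha : a ∈ S)
    (hb : b ∈ S) (hab : a * b⁻¹ ∈ H) : a = b :=
  (hS.2 b).unique ⟨ha, hab⟩ ⟨hb, by simp [H.one_mem]⟩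

local notation "mkR" => (Quotient.mk'' : G → Quotient (QuotientGroup.rightRel H))

theorem mk_rightRel_eq_iff {a b : G} : mkR a = mkR b ↔ b * a⁻¹ ∈ H :=
  Quotient.eq''.trans QuotientGroup.rightRel_apply

theorem isNRT_range {f : Quotient (QuotientGroup.rightRel H) → G} (hf : ∀ q, mkR (f q) = q)
    (h1 : (1 : G) ∈ range f) : IsNRT H (range f) := by
  refine ⟨h1, fun g => ⟨f (mkR g), ⟨mem_range_self _, ?_⟩, ?_⟩⟩
  · rw [← mk_rightRel_eq_iff, hf]
  · rintro _ ⟨⟨q, rfl⟩, hq⟩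
    rw [← mk_rightRel_eq_iff, hf] at hq
    rw [hq]

theorem exists_isNRT_superset {T : Set G} (h1 : (1 : G) ∈ T)
    (hT : T.Pairwise fun a b => a * b⁻¹ ∉ H) : ∃ S, IsNRT H S ∧ T ⊆ S := by
  classical
  have hinj : InjOn mkR T := fun a ha b hb hab =>
    by_contra fun hne => hT ha hb hne (mk_rightRel_eq_iff.mp hab.symm)
  let f : Quotient (QuotientGroup.rightRel H) → G := fun q =>
    if q ∈ mkR '' T then invFunOn mkR T q else q.out
  have hf : ∀ q, mkR (f q) = q := by
    intro q
    by_cases hq : q ∈ mkR '' T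
    · simpa only [f, if_pos hq] using invFunOn_eq hq
    · simpa only [f, if_neg hq] using q.out_eq'
  have hTf : ∀ t ∈ T, f (mkR t) = t := fun t ht => by
    simpa only [f, if_pos (mem_image_of_mem _ ht)] using hinj.leftInvOn_invFunOn ht
  exact ⟨range f, isNRT_range hf ⟨_, hTf 1 h1⟩, fun t ht => ⟨_, hTf t ht⟩⟩

theorem pairwise_one_self_mul_of_conj_notMem {g h : G} (hh : h ∈ H)
    (hghg : g * h * g⁻¹ ∉ H) : ({1, g, g * h} : Set G).Pairwise fun a b => a * b⁻¹ ∉ H := by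
  have hg : g ∉ H := fun hg => hghg (H.mul_mem (H.mul_mem hg hh) (H.inv_mem hg))
  have hgh : g * h ∉ H := fun hgh => hg (by simpa using H.mul_mem hgh (H.inv_mem hh))
  have hghg' : g * (h⁻¹ * g⁻¹) ∉ H := fun hm => hghg (by simpa [mul_assoc] using H.inv_mem hm)
  simp [pairwise_insert, hg, hgh, hghg, hghg']

end Transversals

theorem stmt_7 (H : Subgroup G)
    (hAr : ∀ S : Set G, IsNRT H S → ∀ h ∈ H, (fun x => h⁻¹ * x * h) '' S = S) :
    H.Normal := by
  refine ⟨fun h hh g => ?_⟩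
  by_contra hghg
  obtain ⟨S, hS, hTS⟩ :=
    exists_isNRT_superset (by simp) (pairwise_one_self_mul_of_conj_notMem hh hghg)
  have hconj : h⁻¹ * g * h ∈ S := hAr S hS h hh ▸ ⟨g, hTS (by simp), rfl⟩
  have hcancel : h⁻¹ * g * h = g * h :=
    hS.eq_of_mul_inv_mem_s7 hconj (hTS (by simp)) (by simpa [mul_assoc] using H.inv_mem hh)
  have h1 : h = 1 := inv_eq_one.mp (mul_eq_right.mp (mul_right_cancel hcancel))
  exact hghg (by simp [h1])
end

section
/- Let G be a group, H a subgroup, S a normalized right transversal of H in G with induced operation ∘. If S is right conjugacy closed (for each pair x, y ∈ S there exists z ∈ S with R_x R_y R_x⁻¹ = R_z), then for every x ∈ S there exists a ∈ S with x∘a = 1. -/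
variable {G : Type*} [Group G]

/-! Pick a left inverse `w` of `x` (the element of `S` in the coset `Hx⁻¹`) and let `z` be the element
given by right conjugacy closedness for the pair `x, w`. Evaluating `R_x R_w = R_z R_x` at `1`,
which is a left identity of `S`, gives `w ∘ x = x ∘ z`, so `x ∘ z = 1`. -/

namespace IsNRT

variable {H : Subgroup G} {S : Set G} {op : G → G → G}

theorem op_eq_of_mul_inv_mem (hS : IsNRT H S) (hop : IsOp H S op) {x y s : G}
    (hx : x ∈ S) (hy : y ∈ S) (hs : s ∈ S) (hsxy : s * (x * y)⁻¹ ∈ H) : op x y = s :=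
  (hS.2 (x * y)).unique (hop x hx y hy) ⟨hs, hsxy⟩

theorem one_op (hS : IsNRT H S) (hop : IsOp H S op) {s : G} (hs : s ∈ S) : op 1 s = s :=
  hS.op_eq_of_mul_inv_mem hop hS.1 hs hs (by simp)

theorem exists_op_eq_one (hS : IsNRT H S) (hop : IsOp H S op) {x : G} (hx : x ∈ S) :
    ∃ w ∈ S, op w x = 1 := by
  obtain ⟨w, ⟨hw, hwx⟩, -⟩ := hS.2 x⁻¹
  rw [inv_inv] at hwx
  exact ⟨w, hw, hS.op_eq_of_mul_inv_mem hop hw hx hS.1 (by simpa using H.inv_mem hwx)⟩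

end IsNRT

theorem stmt_10 (H : Subgroup G) (S : Set G) (hS : IsNRT H S)
    (op : G → G → G) (hop : IsOp H S op)
    (hrcc : ∀ x ∈ S, ∀ y ∈ S, ∃ z ∈ S, ∀ w ∈ S, op (op w y) x = op (op w x) z) :
    ∀ x ∈ S, ∃ a ∈ S, op x a = 1 := by
  intro x hx
  obtain ⟨w, hw, hwx⟩ := hS.exists_op_eq_one hop hx
  obtain ⟨z, hz, hconj⟩ := hrcc x hx w hw
  refine ⟨z, hz, ?_⟩
  have h := hconj 1 hS.1
  rwa [hS.one_op hop hw, hS.one_op hop hx, hwx, eq_comm] at h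
end

section
/- Let G be a group, H a subgroup, and S a normalized right transversal of H in G with induced operation ∘. Then (S, ∘) is a right loop: 1 is a two-sided identity (1∘x = x∘1 = x for all x ∈ S) and for each x ∈ S the map R_x: y ↦ y∘x is a bijection of S; moreover every x ∈ S has a unique left inverse x' with x'∘x = 1. -/
variable {G : Type*} [Group G]

/-! Two elements of `S` lying in the same right coset of `H` are equal, so `op x y = z` holds
exactly when `z ∈ Hxy`. From this, `1` is a two-sided identity, and `y ↦ y ∘ x` is injective
(`y ∘ x = y' ∘ x` puts `yx` and `y'x` in one coset) and surjective (`z = y ∘ x` for the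
representative `y` of `Hzx⁻¹`). The unique left inverse of `x` is the preimage of `1`. -/

theorem Set.BijOn.existsUnique {α β : Type*} {f : α → β} {s : Set α} {t : Set β}
    (hf : Set.BijOn f s t) {b : β} (hb : b ∈ t) : ∃! a, a ∈ s ∧ f a = b := by
  obtain ⟨a, ha, rfl⟩ := hf.surjOn hb
  exact ⟨a, ⟨ha, rfl⟩, fun a' ⟨ha', he⟩ => hf.injOn ha' ha he⟩

section RightLoop

variable {H : Subgroup G} {S : Set G}

theorem IsNRT.eq_of_mul_inv_mem_s16 (hS : IsNRT H S) {s t : G} (hs : s ∈ S) (ht : t ∈ S)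
    (hst : s * t⁻¹ ∈ H) : s = t := by
  obtain ⟨u, -, hu⟩ := hS.2 t
  rw [hu s ⟨hs, hst⟩, hu t ⟨ht, by simp⟩]

variable {op : G → G → G}

theorem IsOp.eq_iff_mul_inv_mem (hS : IsNRT H S) (hop : IsOp H S op) {x y z : G}
    (hx : x ∈ S) (hy : y ∈ S) (hz : z ∈ S) : op x y = z ↔ z * (x * y)⁻¹ ∈ H := by
  refine ⟨?_, fun h => hS.eq_of_mul_inv_mem_s16 (hop x hx y hy).1 hz ?_⟩
  · rintro rfl
    exact (hop x hx y hy).2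
  · have key : op x y * z⁻¹ = op x y * (x * y)⁻¹ * (z * (x * y)⁻¹)⁻¹ := by group
    exact key ▸ H.mul_mem (hop x hx y hy).2 (H.inv_mem h)

theorem IsOp.one_left (hS : IsNRT H S) (hop : IsOp H S op) {x : G} (hx : x ∈ S) :
    op 1 x = x :=
  (hop.eq_iff_mul_inv_mem hS hS.1 hx hx).2 (by simp)

theorem IsOp.one_right (hS : IsNRT H S) (hop : IsOp H S op) {x : G} (hx : x ∈ S) :
    op x 1 = x :=
  (hop.eq_iff_mul_inv_mem hS hx hS.1 hx).2 (by simp)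

theorem IsOp.injOn_right (hS : IsNRT H S) (hop : IsOp H S op) {x : G} (hx : x ∈ S) :
    Set.InjOn (fun y => op y x) S := by
  intro y hy y' hy' (he : op y x = op y' x)
  have hyx : op y' x * (y * x)⁻¹ ∈ H :=
    (hop.eq_iff_mul_inv_mem hS hy hx (hop y' hy' x hx).1).1 he
  have hy'x : op y' x * (y' * x)⁻¹ ∈ H := (hop y' hy' x hx).2
  refine hS.eq_of_mul_inv_mem_s16 hy hy' ?_
  have key : y * y'⁻¹ = (op y' x * (y * x)⁻¹)⁻¹ * (op y' x * (y' * x)⁻¹) := by group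
  exact key ▸ H.mul_mem (H.inv_mem hyx) hy'x

theorem IsOp.surjOn_right (hS : IsNRT H S) (hop : IsOp H S op) {x : G} (hx : x ∈ S) :
    Set.SurjOn (fun y => op y x) S S := by
  intro z hz
  obtain ⟨y, ⟨hy, hyz⟩, -⟩ := hS.2 (z * x⁻¹)
  refine ⟨y, hy, (hop.eq_iff_mul_inv_mem hS hy hx hz).2 ?_⟩
  have key : z * (y * x)⁻¹ = (y * (z * x⁻¹)⁻¹)⁻¹ := by group
  exact key ▸ H.inv_mem hyz

theorem IsOp.bijOn_right (hS : IsNRT H S) (hop : IsOp H S op) {x : G} (hx : x ∈ S) :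
    Set.BijOn (fun y => op y x) S S :=
  ⟨fun y hy => (hop y hy x hx).1, hop.injOn_right hS hx, hop.surjOn_right hS hx⟩

end RightLoop

theorem stmt_16 (H : Subgroup G) (S : Set G) (hS : IsNRT H S)
    (op : G → G → G) (hop : IsOp H S op) :
    (∀ x ∈ S, op 1 x = x ∧ op x 1 = x) ∧
    (∀ x ∈ S, Set.BijOn (fun y => op y x) S S) ∧
    (∀ x ∈ S, ∃! a, a ∈ S ∧ op a x = 1) :=
  ⟨fun _ hx => ⟨hop.one_left hS hx, hop.one_right hS hx⟩,
    fun _ hx => hop.bijOn_right hS hx,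
    fun _ hx => (hop.bijOn_right hS hx).existsUnique hS.1⟩
end

section
/- Let G be a group and H a subgroup such that every normalized right transversal of H in G has the right inverse property. If additionally [G:H] is finite or H is finite, then H is normal in G. -/
variable {G : Type*} [Group G]

/-!
If `H` is not normal, pick `n ∈ H` and `g` with `g⁻¹ n g ∉ H`. Every right coset `Hγ` then has a
representative outside the left coset `gH` (if `γ ∈ gH`, take `nγ`), so there is a normalized right
transversal `S` disjoint from `gH`. For the element `x ∈ S` of the coset `Hg⁻¹`, the right inverse
property gives `r x ∈ S` with `x * r x ∈ H`, i.e. `r x ∈ x⁻¹H = gH`, a contradiction.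
-/

open QuotientGroup

section Transversal

variable {H : Subgroup G}

theorem Subgroup.exists_conj_notMem_of_not_normal_s17 (hH : ¬H.Normal) :
    ∃ n ∈ H, ∃ g : G, g⁻¹ * n * g ∉ H := by
  by_contra! h
  exact hH ⟨fun n hn g => by simpa using h n hn g⁻¹⟩

theorem exists_mem_rightCoset_notMem_leftCoset {n g : G} (hn : n ∈ H) (hg : g⁻¹ * n * g ∉ H)
    (γ : G) : ∃ s, g⁻¹ * s ∉ H ∧ s * γ⁻¹ ∈ H := by
  by_cases hγ : g⁻¹ * γ ∈ H
  · refine ⟨n * γ, fun h => hg ?_, by simpa using hn⟩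
    simpa [mul_assoc] using H.mul_mem h (H.inv_mem hγ)
  · exact ⟨γ, hγ, by simp⟩

theorem rightRel_mk_eq_mk_iff {a b : G} :
    (Quotient.mk (rightRel H) a = Quotient.mk _ b) ↔ b * a⁻¹ ∈ H :=
  Quotient.eq.trans rightRel_apply

theorem exists_isNRT_subset {P : Set G} (hP₁ : (1 : G) ∈ P)
    (hP : ∀ γ : G, ∃ s ∈ P, s * γ⁻¹ ∈ H) : ∃ S ⊆ P, IsNRT H S := by
  classical
  choose f hfP hf using hP
  let σ : Quotient (rightRel H) → G :=
    Function.update (fun q => f q.out) (Quotient.mk _ 1) 1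
  have hσP : ∀ q, σ q ∈ P := by
    intro q
    by_cases hq : q = Quotient.mk _ 1
    · simpa [σ, hq] using hP₁
    · simpa [σ, hq] using hfP q.out
  have hσ : ∀ q, Quotient.mk _ (σ q) = q := by
    intro q
    by_cases hq : q = Quotient.mk _ 1
    · simp [σ, hq]
    · calc Quotient.mk _ (σ q) = Quotient.mk _ q.out :=
            rightRel_mk_eq_mk_iff.2 (by simpa [σ, hq] using H.inv_mem (hf q.out))
        _ = q := q.out_eq
  refine ⟨Set.range σ, Set.range_subset_iff.2 hσP, ⟨Quotient.mk _ 1, by simp [σ]⟩, fun γ =>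
    ⟨σ (Quotient.mk _ γ), ⟨⟨_, rfl⟩, by rw [← rightRel_mk_eq_mk_iff, hσ]⟩, ?_⟩⟩
  rintro _ ⟨⟨q, rfl⟩, hq⟩
  rw [← rightRel_mk_eq_mk_iff, hσ] at hq
  rw [hq]

end Transversal

section Operation

variable {H : Subgroup G} {S : Set G} {op : G → G → G}

theorem IsNRT.exists_isOp (hS : IsNRT H S) : ∃ op, IsOp H S op := by
  choose op hop using fun x y : G => (hS.2 (x * y)).exists
  exact ⟨op, fun x _ y _ => hop x y⟩

theorem IsOp.one_op (hop : IsOp H S op) (hS : IsNRT H S) {x : G} (hx : x ∈ S) : op 1 x = x :=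
  (hS.2 x).unique (by simpa using hop 1 hS.1 x hx) ⟨hx, by simp⟩

theorem IsOp.mul_mem_of_op_eq_one_s17 (hop : IsOp H S op) {x y : G} (hx : x ∈ S) (hy : y ∈ S)
    (h : op x y = 1) : x * y ∈ H := by
  simpa [h] using H.inv_mem (hop x hx y hy).2

end Operation

theorem stmt_17_general (H : Subgroup G)
    (hrip : ∀ S : Set G, ∀ op : G → G → G, IsNRT H S → IsOp H S op →
      ∃ r : G → G, ∀ x ∈ S, r x ∈ S ∧
        ∀ y ∈ S, op (op y x) (r x) = y ∧ op (op y (r x)) x = y) :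
    H.Normal := by
  by_contra hN
  obtain ⟨n, hn, g, hg⟩ := H.exists_conj_notMem_of_not_normal_s17 hN
  have hgH : g ∉ H := fun h => hg (H.mul_mem (H.mul_mem (H.inv_mem h) hn) h)
  obtain ⟨S, hSg, hS⟩ := exists_isNRT_subset (H := H) (P := {s | g⁻¹ * s ∉ H})
    (by simpa using hgH) (exists_mem_rightCoset_notMem_leftCoset hn hg)
  obtain ⟨op, hop⟩ := hS.exists_isOp
  obtain ⟨r, hr⟩ := hrip S op hS hop
  obtain ⟨x, ⟨hxS, hxg⟩, -⟩ := hS.2 g⁻¹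
  obtain ⟨hrxS, hrx⟩ := hr x hxS
  have hxr : x * r x ∈ H :=
    hop.mul_mem_of_op_eq_one_s17 hxS hrxS (by simpa [hop.one_op hS hxS] using (hrx 1 hS.1).1)
  exact hSg hrxS (by simpa [mul_assoc] using H.mul_mem (H.inv_mem hxg) hxr)

theorem stmt_17 (H : Subgroup G) (hfin : Finite H ∨ H.FiniteIndex)
    (hrip : ∀ S : Set G, ∀ op : G → G → G, IsNRT H S → IsOp H S op →
      ∃ r : G → G, ∀ x ∈ S, r x ∈ S ∧
        ∀ y ∈ S, op (op y x) (r x) = y ∧ op (op y (r x)) x = y) :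
    H.Normal :=
  stmt_17_general H hrip
end
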